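/- arXiv:2512.06878 — 3 statements merged into one kernel-verified Lean document; each statement's English description precedes it below -/
import Mathlib

section
/- The complement of the 6-cycle, \overline{C_6}, is not anti-even-signable: there is no labelling σ : E(\overline{C_6}) → ℤ/2 such that every triangle has label-sum 0 and every induced 4-cycle has label-sum 1. -/
/-- A closed walk is an induced cycle if it is a cycle and every edge of the graph between
vertices of the cycle is an edge of the cycle. -/
def IsInducedCycle {V : Type*} (G : SimpleGraph V) {v : V} (C : G.Walk v v) : Prop :=
  C.IsCycle ∧ ∀ a ∈ C.support, ∀ b ∈ C.support, G.Adj a b → s(a, b) ∈ C.edges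

/-- A labelling is anti-even-balancing if every induced triangle has label-sum `0` and every
induced cycle of length at least `4` has label-sum `1` (in `ℤ/2`). -/
def AntiEvenBalancing {V : Type*} (G : SimpleGraph V) (σ : Sym2 V → ZMod 2) : Prop :=
  ∀ (v : V) (C : G.Walk v v), IsInducedCycle G C →
    (C.edges.map σ).sum = if C.length = 3 then 0 else 1

/-- A graph is anti-even-signable if it admits an anti-even-balancing labelling. -/
def AntiEvenSignable {V : Type*} (G : SimpleGraph V) : Prop :=
  ∃ σ : Sym2 V → ZMod 2, AntiEvenBalancing G σ

private abbrev G6 := (SimpleGraph.cycleGraph 6)ᶜ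

private def w1 : G6.Walk 0 0 :=
  .cons (by decide) (.cons (by decide : G6.Adj 2 4) (.cons (by decide : G6.Adj 4 0) .nil))
private def w2 : G6.Walk 1 1 :=
  .cons (by decide) (.cons (by decide : G6.Adj 3 5) (.cons (by decide : G6.Adj 5 1) .nil))
private def w3 : G6.Walk 0 0 :=
  .cons (by decide) (.cons (by decide : G6.Adj 3 1) (.cons (by decide : G6.Adj 1 4)
    (.cons (by decide : G6.Adj 4 0) .nil)))
private def w4 : G6.Walk 0 0 :=
  .cons (by decide) (.cons (by decide : G6.Adj 3 5) (.cons (by decide : G6.Adj 5 2)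
    (.cons (by decide : G6.Adj 2 0) .nil)))
private def w5 : G6.Walk 1 1 :=
  .cons (by decide) (.cons (by decide : G6.Adj 4 2) (.cons (by decide : G6.Adj 2 5)
    (.cons (by decide : G6.Adj 5 1) .nil)))

private lemma ind1 : IsInducedCycle G6 w1 := by
  unfold IsInducedCycle
  rw [SimpleGraph.Walk.isCycle_def, SimpleGraph.Walk.isTrail_def]; decide
private lemma ind2 : IsInducedCycle G6 w2 := by
  unfold IsInducedCycle
  rw [SimpleGraph.Walk.isCycle_def, SimpleGraph.Walk.isTrail_def]; decide
private lemma ind3 : IsInducedCycle G6 w3 := by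
  unfold IsInducedCycle
  rw [SimpleGraph.Walk.isCycle_def, SimpleGraph.Walk.isTrail_def]; decide
private lemma ind4 : IsInducedCycle G6 w4 := by
  unfold IsInducedCycle
  rw [SimpleGraph.Walk.isCycle_def, SimpleGraph.Walk.isTrail_def]; decide
private lemma ind5 : IsInducedCycle G6 w5 := by
  unfold IsInducedCycle
  rw [SimpleGraph.Walk.isCycle_def, SimpleGraph.Walk.isTrail_def]; decide

private lemma zmod2_fact : ∀ a b c d e f g h i : ZMod 2,
    a + (b + c) = 0 → d + (e + f) = 0 → g + (d + (h + c)) = 1 →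
    g + (e + (i + a)) = 1 → h + (b + (i + f)) = 1 → False := by decide

theorem complementC6_not_antiEvenSignable :
    ¬ AntiEvenSignable ((SimpleGraph.cycleGraph 6)ᶜ) := by
  rintro ⟨σ, hσ⟩
  have h1 := hσ 0 w1 ind1
  have h2 := hσ 1 w2 ind2
  have h3 := hσ 0 w3 ind3
  have h4 := hσ 0 w4 ind4
  have h5 := hσ 1 w5 ind5
  simp [w1, w2, w3, w4, w5, SimpleGraph.Walk.edges, SimpleGraph.Walk.length] at h1 h2 h3 h4 h5
  have e1 : σ s(2, 0) = σ s(0, 2) := by rw [Sym2.eq_swap]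
  have e2 : σ s(4, 2) = σ s(2, 4) := by rw [Sym2.eq_swap]
  have e3 : σ s(3, 1) = σ s(1, 3) := by rw [Sym2.eq_swap]
  have e4 : σ s(2, 5) = σ s(5, 2) := by rw [Sym2.eq_swap]
  rw [e1] at h4
  rw [e2, e4] at h5
  rw [e3] at h3
  exact zmod2_fact _ _ _ _ _ _ _ _ _ h1 h2 h3 h4 h5
end

section
/- For any two non-adjacent distinct vertices x, y of \overline{ℂ_3} (i.e., unit complex numbers with rational arguments and |arg(x/y)| > 2π/3), there exist vertices z and w such that z and w are non-adjacent to each other, and {x, y, z, w} induces a 4-cycle in \overline{ℂ_3} (with z and w each adjacent to both x and y). -/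
open Complex Real

private lemma argExpAux (θ : ℝ) (h : θ ∈ Set.Ioc (-π) π) :
    Complex.arg (Complex.exp ((θ : ℂ) * Complex.I)) = θ := by
  rw [Complex.exp_mul_I]
  exact_mod_cast Complex.arg_cos_add_sin_mul_I h

private lemma ratOfAngleEq {s t : ℝ} (h : (s : Real.Angle) = (t : Real.Angle))
    (ht : ∃ q : ℚ, t = (q : ℝ) * π) : ∃ q : ℚ, s = (q : ℝ) * π := by
  obtain ⟨k, hk⟩ := Real.Angle.angle_eq_iff_two_pi_dvd_sub.mp h
  obtain ⟨q, hq⟩ := ht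
  refine ⟨q + 2 * k, ?_⟩
  push_cast
  have : s = t + 2 * π * k := by linarith
  rw [this, hq]; ring

private lemma helper (x y : ℂ)
    (hx : ‖x‖ = 1) (hx' : ∃ q : ℚ, Complex.arg x = (q : ℝ) * Real.pi)
    (hy : ‖y‖ = 1) (hy' : ∃ q : ℚ, Complex.arg y = (q : ℝ) * Real.pi)
    (ha : 2 * Real.pi / 3 < Complex.arg (x / y)) :
    ∃ z w : ℂ, ‖z‖ = 1 ∧ (∃ q : ℚ, Complex.arg z = (q : ℝ) * Real.pi) ∧
      ‖w‖ = 1 ∧ (∃ q : ℚ, Complex.arg w = (q : ℝ) * Real.pi) ∧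
      z ≠ w ∧ z ≠ x ∧ z ≠ y ∧ w ≠ x ∧ w ≠ y ∧
      2 * Real.pi / 3 < |Complex.arg (z / w)| ∧
      |Complex.arg (x / z)| ≤ 2 * Real.pi / 3 ∧
      |Complex.arg (y / z)| ≤ 2 * Real.pi / 3 ∧
      |Complex.arg (x / w)| ≤ 2 * Real.pi / 3 ∧
      |Complex.arg (y / w)| ≤ 2 * Real.pi / 3 := by
  have pi_pos := Real.pi_pos
  have hx0 : x ≠ 0 := by intro h; rw [h] at hx; simp at hx
  have hy0 : y ≠ 0 := by intro h; rw [h] at hy; simp at hy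
  set a : ℝ := Complex.arg (x / y) with ha_def
  have haIoc : a ∈ Set.Ioc (-π) π := Complex.arg_mem_Ioc _
  have ha1 : 2 * π / 3 < a := ha
  have ha2 : a ≤ π := haIoc.2
  -- rationality of a
  have haQ : ∃ q : ℚ, a = (q : ℝ) * π := by
    apply ratOfAngleEq (t := Complex.arg x - Complex.arg y)
    · rw [ha_def]
      rw [Complex.arg_div_coe_angle hx0 hy0]
      push_cast
      rfl
    · obtain ⟨qx, hqx⟩ := hx'; obtain ⟨qy, hqy⟩ := hy'
      exact ⟨qx - qy, by rw [hqx, hqy]; push_cast; ring⟩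
  obtain ⟨qa, hqa⟩ := haQ
  have hxy_exp : x / y = Complex.exp ((a : ℂ) * Complex.I) := by
    have := Complex.norm_mul_exp_arg_mul_I (x / y)
    rw [norm_div, hx, hy] at this
    simpa using this.symm
  set e : ℂ := Complex.exp (((a / 2 : ℝ) : ℂ) * Complex.I) with he_def
  have he_abs : ‖e‖ = 1 := Complex.norm_exp_ofReal_mul_I _
  have he0 : e ≠ 0 := Complex.exp_ne_zero _
  set z : ℂ := y * e with hz_def
  have hz0 : z ≠ 0 := mul_ne_zero hy0 he0
  have hzabs : ‖z‖ = 1 := by rw [hz_def, norm_mul, hy, he_abs, one_mul]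
  have hee : e * e = Complex.exp ((a : ℂ) * Complex.I) := by
    rw [he_def, ← Complex.exp_add]
    congr 1
    push_cast
    ring
  have hxz : x / z = e := by
    rw [hz_def]
    field_simp
    rw [div_eq_iff hy0] at hxy_exp
    rw [hxy_exp, ← hee]
    ring
  have hyz : y / z = Complex.exp (((-(a / 2) : ℝ) : ℂ) * Complex.I) := by
    have h1 : y / z = e⁻¹ := by rw [hz_def]; field_simp
    rw [h1, he_def, ← Complex.exp_neg]
    congr 1
    push_cast
    ring
  set w : ℂ := -z with hw_def
  have hw0 : w ≠ 0 := neg_ne_zero.mpr hz0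
  have hwabs : ‖w‖ = 1 := by rw [hw_def, norm_neg, hzabs]
  have hxw : x / w = Complex.exp (((a / 2 - π : ℝ) : ℂ) * Complex.I) := by
    have : x / w = -(x / z) := by rw [hw_def, div_neg]
    rw [this, hxz, he_def]
    rw [show (((a / 2 - π : ℝ)) : ℂ) * Complex.I = ((a/2 : ℝ) : ℂ) * Complex.I + (π : ℂ) * Complex.I * (-1) by push_cast; ring]
    rw [Complex.exp_add]
    rw [show (π : ℂ) * Complex.I * (-1) = -(π * Complex.I) by ring, Complex.exp_neg, Complex.exp_pi_mul_I]
    ring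
  have hyw : y / w = Complex.exp (((π - a / 2 : ℝ) : ℂ) * Complex.I) := by
    have : y / w = -(y / z) := by rw [hw_def, div_neg]
    rw [this, hyz]
    rw [show (((π - a / 2 : ℝ)) : ℂ) * Complex.I = ((-(a/2) : ℝ) : ℂ) * Complex.I + (π : ℂ) * Complex.I by push_cast; ring]
    rw [Complex.exp_add, Complex.exp_pi_mul_I]
    ring
  have hzw : z / w = -1 := by rw [hw_def, div_neg, div_self hz0]
  -- args
  have h3 : π / 3 < a / 2 := by linarith
  have harg_xz : Complex.arg (x / z) = a / 2 := by
    rw [hxz, he_def]; exact argExpAux _ ⟨by linarith, by linarith⟩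
  have harg_yz : Complex.arg (y / z) = -(a / 2) := by
    rw [hyz]; exact argExpAux _ ⟨by linarith, by linarith⟩
  have harg_xw : Complex.arg (x / w) = a / 2 - π := by
    rw [hxw]; exact argExpAux _ ⟨by linarith, by linarith⟩
  have harg_yw : Complex.arg (y / w) = π - a / 2 := by
    rw [hyw]; exact argExpAux _ ⟨by linarith, by linarith⟩
  have harg_zw : Complex.arg (z / w) = π := by rw [hzw, Complex.arg_neg_one]
  -- rationality of z, w
  have hzQ : ∃ q : ℚ, Complex.arg z = (q : ℝ) * π := by
    apply ratOfAngleEq (t := Complex.arg y + a / 2)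
    · rw [hz_def, Complex.arg_mul_coe_angle hy0 he0, he_def,
        argExpAux _ ⟨by linarith, by linarith⟩]
      push_cast; rfl
    · obtain ⟨qy, hqy⟩ := hy'
      exact ⟨qy + qa / 2, by rw [hqy, hqa]; push_cast; ring⟩
  have hwQ : ∃ q : ℚ, Complex.arg w = (q : ℝ) * π := by
    apply ratOfAngleEq (t := Complex.arg z + π)
    · rw [hw_def, Complex.arg_neg_coe_angle hz0]; push_cast; rfl
    · obtain ⟨qz, hqz⟩ := hzQ
      exact ⟨qz + 1, by rw [hqz]; push_cast; ring⟩
  -- distinctness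
  have dne : ∀ u v : ℂ, v ≠ 0 → Complex.arg (u / v) ≠ 0 → u ≠ v := by
    intro u v hv h huv
    rw [huv, div_self hv] at h
    simp at h
  refine ⟨z, w, hzabs, hzQ, hwabs, hwQ, ?_, ?_, ?_, ?_, ?_, ?_, ?_, ?_, ?_, ?_⟩
  · intro h; rw [hw_def] at h; exact hz0 (by linear_combination (h : z = -z)/2)
  · exact (dne x z hz0 (by rw [harg_xz]; exact ne_of_gt (by linarith))).symm
  · exact (dne y z hz0 (by rw [harg_yz]; exact ne_of_lt (by linarith))).symm
  · exact (dne x w hw0 (by rw [harg_xw]; exact ne_of_lt (by linarith))).symm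
  · exact (dne y w hw0 (by rw [harg_yw]; exact ne_of_gt (by linarith))).symm
  · rw [harg_zw, _root_.abs_of_pos pi_pos]; linarith
  · rw [harg_xz, _root_.abs_of_pos (by linarith)]; linarith
  · rw [harg_yz, abs_neg, _root_.abs_of_pos (by linarith)]; linarith
  · rw [harg_xw, _root_.abs_of_nonpos (by linarith), neg_sub]; linarith
  · rw [harg_yw, _root_.abs_of_nonneg (by linarith)]; linarith

theorem C3bar_nonadjacent_induced_four_cycle (x y : ℂ)
    (hx : ‖x‖ = 1) (hx' : ∃ q : ℚ, Complex.arg x = (q : ℝ) * Real.pi)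
    (hy : ‖y‖ = 1) (hy' : ∃ q : ℚ, Complex.arg y = (q : ℝ) * Real.pi)
    (hxy : 2 * Real.pi / 3 < |Complex.arg (x / y)|) :
    ∃ z w : ℂ, ‖z‖ = 1 ∧ (∃ q : ℚ, Complex.arg z = (q : ℝ) * Real.pi) ∧
      ‖w‖ = 1 ∧ (∃ q : ℚ, Complex.arg w = (q : ℝ) * Real.pi) ∧
      z ≠ w ∧ z ≠ x ∧ z ≠ y ∧ w ≠ x ∧ w ≠ y ∧
      2 * Real.pi / 3 < |Complex.arg (z / w)| ∧
      |Complex.arg (x / z)| ≤ 2 * Real.pi / 3 ∧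
      |Complex.arg (y / z)| ≤ 2 * Real.pi / 3 ∧
      |Complex.arg (x / w)| ≤ 2 * Real.pi / 3 ∧
      |Complex.arg (y / w)| ≤ 2 * Real.pi / 3 := by
  rcases le_or_gt 0 (Complex.arg (x / y)) with h | h
  · have : 2 * Real.pi / 3 < Complex.arg (x / y) := by
      rwa [_root_.abs_of_nonneg h] at hxy
    exact helper x y hx hx' hy hy' this
  · have hne : Complex.arg (x / y) ≠ π := by
      intro hp; rw [hp] at h; exact absurd h (not_lt.mpr Real.pi_pos.le)
    have harg : Complex.arg (y / x) = -Complex.arg (x / y) := by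
      rw [show y / x = (x / y)⁻¹ by rw [inv_div], Complex.arg_inv, if_neg hne]
    have : 2 * Real.pi / 3 < Complex.arg (y / x) := by
      rw [harg]; rwa [_root_.abs_of_neg h] at hxy
    obtain ⟨z, w, h1, h2, h3, h4, h5, h6, h7, h8, h9, h10, h11, h12, h13, h14⟩ :=
      helper y x hy hy' hx hx' this
    exact ⟨z, w, h1, h2, h3, h4, h5, h7, h6, h9, h8, h10, h12, h11, h14, h13⟩
end

section
/- Conversely to the easy direction: if a connected graph G has two edge-labellings σ and σ' that give the same ℤ/2-sum on every cycle of G, then σ and σ' are switching equivalent, i.e., there exists S ⊆ V(G) with σ' = σ^S. -/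
open Classical in
/-- The switch of a labelling `σ` over a vertex set `S`. -/
noncomputable def switch {V : Type*} (S : Set V) (σ : Sym2 V → ZMod 2) : Sym2 V → ZMod 2 :=
  fun e => σ e + (if ∃ a b, e = s(a, b) ∧ ((a ∈ S) ↔ (b ∈ S)) then 0 else 1)

open SimpleGraph

private lemma path_loop_edge_length {V : Type*} {G : SimpleGraph V} {a b : V} (p : G.Walk a b)
    (hp : p.IsPath) (he : s(b, a) ∈ p.edges) : p.length = 1 := by
  induction p with
  | nil => simp at he
  | @cons a c b h q ih =>
    rw [Walk.cons_isPath_iff] at hp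
    rw [Walk.edges_cons, List.mem_cons] at he
    rcases he with he | he
    · rw [Sym2.eq_iff] at he
      rcases he with ⟨hb, rfl⟩ | ⟨rfl, -⟩
      · exact absurd (hb ▸ q.end_mem_support) hp.2
      · have : q = Walk.nil := by
          have := Path.loop_eq ⟨q, hp.1⟩
          simpa using congrArg Subtype.val this
        simp [this]
    · exact absurd (Walk.snd_mem_support_of_mem_edges q he) hp.2

private lemma closed_walk_sum_zero {V : Type*} {G : SimpleGraph V} (g : Sym2 V → ZMod 2)
    (hcyc : ∀ (v : V) (C : G.Walk v v), C.IsCycle → (C.edges.map g).sum = 0) :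
    ∀ (n : ℕ) (v : V) (W : G.Walk v v), W.length ≤ n → (W.edges.map g).sum = 0 := by
  classical
  intro n
  induction n using Nat.strong_induction_on with
  | _ n IH =>
  intro v W hlen
  rcases Nat.eq_zero_or_pos W.length with h0 | hpos
  · have : W.edges = [] := List.length_eq_zero_iff.mp (by rw [Walk.length_edges, h0])
    simp [this]
  by_cases hC : W.IsCycle
  · exact hcyc v W hC
  have hWnil : W ≠ Walk.nil := by
    intro hw; rw [hw] at hpos; simp at hpos
  rw [Walk.isCycle_def] at hC
  push_neg at hC
  by_cases hnd : W.support.tail.Nodup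
  · -- not a trail: repeated edge, length 2 case
    have htrail : ¬ W.IsTrail := by
      intro ht; exact (hC ht hWnil) hnd
    obtain ⟨b, e, W', rfl⟩ := Walk.not_nil_iff.mp (fun hnil => hWnil hnil.eq_nil)
    have hW'nodup : W'.support.Nodup := by simpa using hnd
    have hW'path : W'.IsPath := Walk.IsPath.mk' hW'nodup
    have hmem : s(v, b) ∈ W'.edges := by
      rw [Walk.isTrail_def, Walk.edges_cons, List.nodup_cons] at htrail
      push_neg at htrail
      by_contra hn
      exact (htrail hn) hW'path.isTrail.edges_nodup
    have hlen1 : W'.length = 1 := path_loop_edge_length W' hW'path hmem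
    have : W'.edges = [s(v, b)] := by
      obtain ⟨x, hx⟩ := List.length_eq_one_iff.mp (by rw [Walk.length_edges, hlen1])
      rw [hx] at hmem ⊢
      rw [List.mem_singleton] at hmem
      rw [hmem]
    rw [Walk.edges_cons, this]
    simp [CharTwo.add_self_eq_zero]
  · -- repeated internal vertex: rotate and split
    obtain ⟨u, hdup⟩ := List.exists_duplicate_iff_not_nodup.mpr hnd
    have hucount : 2 ≤ W.support.tail.count u := List.duplicate_iff_two_le_count.mp hdup
    have husupp : u ∈ W.support := List.mem_of_mem_tail hdup.mem
    set U := W.rotate u husupp with hU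
    have hperm : U.edges.Perm W.edges := (Walk.rotate_edges W u husupp).perm
    have hsum_eq : (U.edges.map g).sum = (W.edges.map g).sum := (hperm.map g).sum_eq
    have hUlen : U.length = W.length := by
      have := hperm.length_eq
      rwa [Walk.length_edges, Walk.length_edges] at this
    have hUcount : 2 ≤ U.support.tail.count u := by
      rw [(Walk.support_rotate W u husupp).perm.count_eq u]; exact hucount
    have hUnil : ¬ U.Nil := by
      rw [Walk.nil_iff_length_eq, hUlen]; omega
    obtain ⟨b, e, U', hU'⟩ := Walk.not_nil_iff.mp hUnil
    have hcount' : 2 ≤ U'.support.count u := by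
      rw [hU'] at hUcount; simpa using hUcount
    have hu' : u ∈ U'.support := by
      rw [← List.count_pos_iff]; omega
    set P := U'.takeUntil u hu' with hP
    set Q := U'.dropUntil u hu' with hQ
    have hspec : P.append Q = U' := Walk.take_spec U' hu'
    have hPcount : P.support.count u = 1 := Walk.count_support_takeUntil_eq_one U' hu'
    have hQpos : 1 ≤ Q.length := by
      have hsupp : U'.support = P.support ++ Q.support.tail := by
        rw [← hspec, Walk.support_append]
      rw [hsupp, List.count_append, hPcount] at hcount'
      have h1 : 1 ≤ Q.support.tail.count u := by omega
      have h2 : Q.support.tail.count u ≤ Q.support.tail.length := List.count_le_length (a := u)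
      have h3 : Q.support.tail.length = Q.length := by
        have := Q.length_support
        have := List.length_tail (l := Q.support)
        omega
      omega
    have hlenPQ : P.length + Q.length = U'.length := by
      rw [← hspec] at hu' ⊢
      rw [Walk.length_append]
    have hU'len : U'.length + 1 = W.length := by
      rw [← hUlen, hU']; simp [Walk.length_cons]
    have hn1 : n - 1 < n := by omega
    have hQ0 : (Q.edges.map g).sum = 0 := IH (n - 1) hn1 u Q (by omega)
    have hC0 : (((Walk.cons e P)).edges.map g).sum = 0 :=
      IH (n - 1) hn1 u _ (by rw [Walk.length_cons]; omega)
    rw [← hsum_eq, hU', Walk.edges_cons, ← hspec, Walk.edges_append]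
    rw [Walk.edges_cons] at hC0
    simp only [List.map_cons, List.map_append, List.sum_cons, List.sum_append] at hC0 ⊢
    rw [← add_assoc, hC0, hQ0, add_zero]

private lemma map_sum_add {α : Type*} (f g : α → ZMod 2) (l : List α) :
    (l.map (fun e => f e + g e)).sum = (l.map f).sum + (l.map g).sum := by
  induction l with
  | nil => simp
  | cons a l ih => simp [ih]; ring

theorem same_cycle_sums_switching_equivalent {V : Type*} (G : SimpleGraph V)
    (hG : G.Connected) (σ σ' : Sym2 V → ZMod 2)
    (h : ∀ (v : V) (C : G.Walk v v), C.IsCycle →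
      (C.edges.map σ).sum = (C.edges.map σ').sum) :
    ∃ S : Set V, ∀ e ∈ G.edgeSet, σ' e = switch S σ e := by
  classical
  set δ : Sym2 V → ZMod 2 := fun e => σ e + σ' e with hδ
  have hcyc : ∀ (v : V) (C : G.Walk v v), C.IsCycle → (C.edges.map δ).sum = 0 := by
    intro v C hc
    rw [hδ, map_sum_add, ← h v C hc, CharTwo.add_self_eq_zero]
  obtain ⟨v₀⟩ := hG.nonempty
  set f : V → ZMod 2 := fun v => (((hG.preconnected v₀ v).some).edges.map δ).sum with hf
  refine ⟨{v | f v = 1}, ?_⟩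
  intro e he
  induction e using Sym2.ind with
  | _ a b =>
  have hab : G.Adj a b := he
  set Wa := (hG.preconnected v₀ a).some
  set Wb := (hG.preconnected v₀ b).some
  set Z : G.Walk v₀ v₀ := Wa.append (Walk.cons hab Wb.reverse) with hZ
  have hZ0 : (Z.edges.map δ).sum = 0 :=
    closed_walk_sum_zero δ hcyc Z.length v₀ Z le_rfl
  have hZe : (Z.edges.map δ).sum = f a + (δ s(a, b) + f b) := by
    rw [hZ, Walk.edges_append, Walk.edges_cons, Walk.edges_reverse]
    simp [List.sum_reverse, hf]
    rfl
  have key : δ s(a, b) = f a + f b := by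
    have h3 : ∀ x y z : ZMod 2, x + (y + z) = 0 → y = x + z := by decide
    exact h3 _ _ _ (hZe ▸ hZ0)
  have hcond : (∃ a' b', s(a, b) = s(a', b') ∧
      ((a' ∈ {v | f v = 1}) ↔ (b' ∈ {v | f v = 1}))) ↔ f a = f b := by
    constructor
    · rintro ⟨a', b', heq, hiff⟩
      simp only [Set.mem_setOf_eq] at hiff
      rw [Sym2.eq_iff] at heq
      have h4 : ∀ x y : ZMod 2, (x = 1 ↔ y = 1) → x = y := by decide
      rcases heq with ⟨rfl, rfl⟩ | ⟨rfl, rfl⟩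
      · exact h4 _ _ hiff
      · exact (h4 _ _ hiff).symm
    · intro hfab
      exact ⟨a, b, rfl, by simp [Set.mem_setOf_eq, hfab]⟩
  have h5 : ∀ x y : ZMod 2, x + y = if x = y then 0 else 1 := by decide
  unfold switch
  split_ifs with hif
  · have hfab : f a = f b := hcond.mp hif
    have : δ s(a, b) = 0 := by rw [key, hfab, CharTwo.add_self_eq_zero]
    have h6 : ∀ x y : ZMod 2, x + y = 0 → y = x + 0 := by decide
    exact h6 _ _ this
  · have hfab : f a ≠ f b := fun hh => hif (hcond.mpr hh)
    have : δ s(a, b) = 1 := by rw [key, h5]; simp [hfab]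
    have h7 : ∀ x y : ZMod 2, x + y = 1 → y = x + 1 := by decide
    exact h7 _ _ this
end
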